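/- For any point x ∈ S^d with x ≠ ±v, the residual ξ = ρ_d(x,v) - r from the subsphere A(v,r) satisfies |ξ| = ρ_d(x, P(x)), where P(x) is the closest point on A(v,r) to x. -/

import Mathlib

open scoped RealInnerProductSpace

open Real

/-!
Write `θ = arccos ⟪x, v⟫` and `w = x - ⟪v, x⟫ • v` for the component of `x` orthogonal to `v`.
Since `x` is a unit vector, `‖w‖ = sin θ` and `⟪x, w⟫ = ‖w‖ ^ 2`, so
`⟪x, P x⟫ = cos r cos θ + sin r sin θ = cos (θ - r)`; as `θ ∈ [0, π]` and `r ∈ [0, π]`,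
`|θ - r| ≤ π` and hence `arccos (cos (θ - r)) = |θ - r|`.
-/

theorem Real.arccos_cos_eq_abs {y : ℝ} (hy : |y| ≤ π) : arccos (cos y) = |y| := by
  rw [← cos_abs, arccos_cos (abs_nonneg y) hy]

section

variable {E : Type*} [NormedAddCommGroup E] [InnerProductSpace ℝ E] {v : E}

theorem inner_sub_inner_smul_eq_zero (hv : ‖v‖ = 1) (x : E) : ⟪v, x - ⟪v, x⟫ • v⟫ = 0 := by
  rw [inner_sub_right, real_inner_smul_right, real_inner_self_eq_norm_sq, hv]
  ring

theorem inner_sub_inner_smul_eq_norm_sq (hv : ‖v‖ = 1) (x : E) :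
    ⟪x, x - ⟪v, x⟫ • v⟫ = ‖x - ⟪v, x⟫ • v‖ ^ 2 := by
  rw [← sub_eq_zero, ← real_inner_self_eq_norm_sq, ← inner_sub_left, sub_sub_cancel,
    real_inner_smul_left, inner_sub_inner_smul_eq_zero hv, mul_zero]

theorem norm_sub_inner_smul_sq (hv : ‖v‖ = 1) (x : E) :
    ‖x - ⟪v, x⟫ • v‖ ^ 2 = ‖x‖ ^ 2 - ⟪x, v⟫ ^ 2 := by
  rw [← inner_sub_inner_smul_eq_norm_sq hv, inner_sub_right, real_inner_smul_right,
    real_inner_self_eq_norm_sq, real_inner_comm v x]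
  ring

theorem norm_sub_inner_smul_eq_sin_arccos (hv : ‖v‖ = 1) {x : E} (hx : ‖x‖ = 1) :
    ‖x - ⟪v, x⟫ • v‖ = sin (arccos ⟪x, v⟫) := by
  rw [sin_arccos, ← sqrt_sq (norm_nonneg (x - _)), norm_sub_inner_smul_sq hv, hx, one_pow]

theorem inner_cos_smul_add_sin_smul_normalize (hv : ‖v‖ = 1) {x : E} (hx : ‖x‖ = 1) (r : ℝ) :
    ⟪x, cos r • v + sin r • (‖x - ⟪v, x⟫ • v‖⁻¹ • (x - ⟪v, x⟫ • v))⟫ =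
      cos (arccos ⟪x, v⟫ - r) := by
  have hnorm : ‖x - ⟪v, x⟫ • v‖⁻¹ * ‖x - ⟪v, x⟫ • v‖ ^ 2 = ‖x - ⟪v, x⟫ • v‖ := by
    rw [sq, ← mul_assoc, inv_mul_mul_self]
  obtain ⟨hlo, hhi⟩ := real_inner_mem_Icc_of_norm_eq_one hx hv
  rw [inner_add_right, real_inner_smul_right, real_inner_smul_right, real_inner_smul_right,
    inner_sub_inner_smul_eq_norm_sq hv, hnorm, norm_sub_inner_smul_eq_sin_arccos hv hx,
    cos_sub, cos_arccos hlo hhi]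
  ring

end

theorem residual_abs_eq_dist_to_projection_general (d : ℕ)
    (v x : EuclideanSpace ℝ (Fin (d + 1))) (hv : ‖v‖ = 1) (hx : ‖x‖ = 1)
    (r : ℝ) (hr : r ∈ Set.Ioc 0 (Real.pi / 2)) :
    |Real.arccos ⟪x, v⟫ - r| =
      Real.arccos ⟪x, Real.cos r • v +
        Real.sin r • (‖x - ⟪v, x⟫ • v‖⁻¹ • (x - ⟪v, x⟫ • v))⟫ := by
  have hθr : |arccos ⟪x, v⟫ - r| ≤ π :=
    abs_le.2 ⟨by linarith [arccos_nonneg ⟪x, v⟫, hr.2, pi_pos],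
      by linarith [arccos_le_pi ⟪x, v⟫, hr.1]⟩
  rw [inner_cos_smul_add_sin_smul_normalize hv hx, arccos_cos_eq_abs hθr]

/-- For `x ∈ S^d` with `x ≠ ±v`, the residual `ξ = ρ_d(x,v) - r` from the subsphere
`A(v,r)` satisfies `|ξ| = ρ_d(x, P(x))`, where
`P(x) = cos(r)v + sin(r)(x - ⟨v,x⟩v)/‖x - ⟨v,x⟩v‖` is the closest point on `A(v,r)`. -/
theorem residual_abs_eq_dist_to_projection (d : ℕ)
    (v x : EuclideanSpace ℝ (Fin (d + 1))) (hv : ‖v‖ = 1) (hx : ‖x‖ = 1)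
    (hxv : x ≠ v) (hxv' : x ≠ -v)
    (r : ℝ) (hr : r ∈ Set.Ioc 0 (Real.pi / 2)) :
    |Real.arccos ⟪x, v⟫ - r| =
      Real.arccos ⟪x, Real.cos r • v +
        Real.sin r • (‖x - ⟪v, x⟫ • v‖⁻¹ • (x - ⟪v, x⟫ • v))⟫ :=
  residual_abs_eq_dist_to_projection_general d v x hv hx r hr
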